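/- arXiv:2501.02098 — 2 statements merged into one kernel-verified Lean document; each statement's English description precedes it below -/
import Mathlib

section
/- (Validity of Benders cuts / subgradient property of tight multipliers.) Let x̄, μ̄ ∈ ℝ^p. Assume the set { cᵀy − μ̄ᵀ(z − x̄) : y ∈ ℝ^n, z ∈ ℝ^p, B y ≤ b, C z + D y ≤ q } is nonempty and bounded below, and assume φ^{LR}(x̄, μ̄) = φ(x̄) (μ̄ is a tight/optimal multiplier for the fixing constraint z = x̄). Then for every x ∈ ℝ^p for which there exists y ∈ ℝ^n with B y ≤ b and C x + D y ≤ q, one has φ(x̄) + μ̄ᵀ(x − x̄) ≤ φ(x); i.e., μ̄ is a subgradient of the value function φ at x̄ and the affine cut generated at x̄ is valid. -/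
open Matrix

/-! For every `y` feasible at `x`, the pair `(y, x)` is feasible for the Lagrangian relaxation at
`(x̄, μ̄)` with value `cᵀy − μ̄ᵀ(x − x̄)`, which is therefore at least `φ^{LR}(x̄, μ̄) = φ(x̄)`. -/

theorem csInf_add_le_csInf_of_forall_sub_mem {α : Type*} [ConditionallyCompleteLattice α]
    [AddCommGroup α] [IsOrderedAddMonoid α] {S T : Set α} {a : α}
    (hS : BddBelow S) (hT : T.Nonempty) (h : ∀ t ∈ T, t - a ∈ S) : sInf S + a ≤ sInf T :=
  le_csInf hT fun t ht => le_sub_iff_add_le.mp (csInf_le hS (h t ht))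

theorem benders_cut_valid_general
    {n m k p : ℕ}
    (B : Matrix (Fin m) (Fin n) ℝ) (C : Matrix (Fin k) (Fin p) ℝ)
    (D : Matrix (Fin k) (Fin n) ℝ)
    (c : Fin n → ℝ) (b : Fin m → ℝ) (q : Fin k → ℝ)
    (xbar μbar : Fin p → ℝ)
    (hbdd : BddBelow {r : ℝ | ∃ (y : Fin n → ℝ) (z : Fin p → ℝ),
        B.mulVec y ≤ b ∧ C.mulVec z + D.mulVec y ≤ q ∧
          r = c ⬝ᵥ y - μbar ⬝ᵥ (z - xbar)})
    (htight : sInf {r : ℝ | ∃ (y : Fin n → ℝ) (z : Fin p → ℝ),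
        B.mulVec y ≤ b ∧ C.mulVec z + D.mulVec y ≤ q ∧
          r = c ⬝ᵥ y - μbar ⬝ᵥ (z - xbar)}
      = sInf {r : ℝ | ∃ y : Fin n → ℝ,
        B.mulVec y ≤ b ∧ C.mulVec xbar + D.mulVec y ≤ q ∧ r = c ⬝ᵥ y}) :
    ∀ x : Fin p → ℝ,
      (∃ y : Fin n → ℝ, B.mulVec y ≤ b ∧ C.mulVec x + D.mulVec y ≤ q) →
      sInf {r : ℝ | ∃ y : Fin n → ℝ,
          B.mulVec y ≤ b ∧ C.mulVec xbar + D.mulVec y ≤ q ∧ r = c ⬝ᵥ y}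
          + μbar ⬝ᵥ (x - xbar)
        ≤ sInf {r : ℝ | ∃ y : Fin n → ℝ,
          B.mulVec y ≤ b ∧ C.mulVec x + D.mulVec y ≤ q ∧ r = c ⬝ᵥ y} := by
  rintro x ⟨y₀, hy₀B, hy₀CD⟩
  rw [← htight]
  refine csInf_add_le_csInf_of_forall_sub_mem (a := μbar ⬝ᵥ (x - xbar)) hbdd
    ⟨_, y₀, hy₀B, hy₀CD, rfl⟩ ?_
  rintro _ ⟨y, hyB, hyCD, rfl⟩
  exact ⟨y, x, hyB, hyCD, rfl⟩

/-- **Validity of Benders cuts / subgradient property of tight multipliers.**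
If `μbar` is a tight multiplier at `xbar`, i.e. `φ^{LR}(xbar, μbar) = φ(xbar)`,
then `φ(xbar) + μbarᵀ(x − xbar) ≤ φ(x)` at every feasible `x`. -/
theorem benders_cut_valid
    {n m k p : ℕ}
    (B : Matrix (Fin m) (Fin n) ℝ) (C : Matrix (Fin k) (Fin p) ℝ)
    (D : Matrix (Fin k) (Fin n) ℝ)
    (c : Fin n → ℝ) (b : Fin m → ℝ) (q : Fin k → ℝ)
    (xbar μbar : Fin p → ℝ)
    (hne : {r : ℝ | ∃ (y : Fin n → ℝ) (z : Fin p → ℝ),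
        B.mulVec y ≤ b ∧ C.mulVec z + D.mulVec y ≤ q ∧
          r = c ⬝ᵥ y - μbar ⬝ᵥ (z - xbar)}.Nonempty)
    (hbdd : BddBelow {r : ℝ | ∃ (y : Fin n → ℝ) (z : Fin p → ℝ),
        B.mulVec y ≤ b ∧ C.mulVec z + D.mulVec y ≤ q ∧
          r = c ⬝ᵥ y - μbar ⬝ᵥ (z - xbar)})
    (htight : sInf {r : ℝ | ∃ (y : Fin n → ℝ) (z : Fin p → ℝ),
        B.mulVec y ≤ b ∧ C.mulVec z + D.mulVec y ≤ q ∧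
          r = c ⬝ᵥ y - μbar ⬝ᵥ (z - xbar)}
      = sInf {r : ℝ | ∃ y : Fin n → ℝ,
        B.mulVec y ≤ b ∧ C.mulVec xbar + D.mulVec y ≤ q ∧ r = c ⬝ᵥ y}) :
    ∀ x : Fin p → ℝ,
      (∃ y : Fin n → ℝ, B.mulVec y ≤ b ∧ C.mulVec x + D.mulVec y ≤ q) →
      sInf {r : ℝ | ∃ y : Fin n → ℝ,
          B.mulVec y ≤ b ∧ C.mulVec xbar + D.mulVec y ≤ q ∧ r = c ⬝ᵥ y}
          + μbar ⬝ᵥ (x - xbar)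
        ≤ sInf {r : ℝ | ∃ y : Fin n → ℝ,
          B.mulVec y ≤ b ∧ C.mulVec x + D.mulVec y ≤ q ∧ r = c ⬝ᵥ y} :=
  benders_cut_valid_general B C D c b q xbar μbar hbdd htight
end

section
/- (Convexity of the linear-programming value function.) Let S = { v ∈ ℝ^p : ∃ y ∈ ℝ^n, B y ≤ b ∧ C v + D y ≤ q } be the set of points at which the second-stage problem is feasible. Then S is a convex set; moreover, if there exists L ∈ ℝ such that cᵀy ≥ L for every v ∈ S and every y ∈ ℝ^n with B y ≤ b and C v + D y ≤ q, then the value function φ is convex on S (ConvexOn ℝ S φ). -/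
/-!
The feasible pairs `(v, y)` of the second-stage problem form a polyhedron, hence a convex set,
whose projection onto `v` is the feasibility region. The value function is the partial minimum
over `y` of the linear objective on this polyhedron, and partial minimization of a jointly
convex function over a convex set is convex: combining near-optimal `y₁` for `v₁` and `y₂`
for `v₂` gives a feasible point for the combined `v` whose value is the combined value.
-/

open Set

section PartialMinimization

variable {E F : Type*} [AddCommGroup E] [Module ℝ E] [AddCommGroup F] [Module ℝ F]
  {G : Set (E × F)} {Φ : E × F → ℝ}

theorem ConvexOn.sInf_fiber_smul_add_smul_le (hΦ : ConvexOn ℝ G Φ) {x₁ x₂ : E} {y₁ y₂ : F}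
    (h₁ : (x₁, y₁) ∈ G) (h₂ : (x₂, y₂) ∈ G) {a t : ℝ} (ha : 0 ≤ a) (ht : 0 ≤ t)
    (hat : a + t = 1)
    (hbdd : BddBelow ((fun y ↦ Φ (a • x₁ + t • x₂, y)) '' {y | (a • x₁ + t • x₂, y) ∈ G})) :
    sInf ((fun y ↦ Φ (a • x₁ + t • x₂, y)) '' {y | (a • x₁ + t • x₂, y) ∈ G}) ≤
      a * Φ (x₁, y₁) + t * Φ (x₂, y₂) :=
  calc _ ≤ Φ (a • (x₁, y₁) + t • (x₂, y₂)) :=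
        csInf_le hbdd ⟨a • y₁ + t • y₂, hΦ.1 h₁ h₂ ha ht hat, rfl⟩
    _ ≤ a • Φ (x₁, y₁) + t • Φ (x₂, y₂) := hΦ.2 h₁ h₂ ha ht hat

theorem ConvexOn.sInf_fiber (hΦ : ConvexOn ℝ G Φ)
    (hbdd : ∀ x ∈ Prod.fst '' G, BddBelow ((fun y ↦ Φ (x, y)) '' {y | (x, y) ∈ G})) :
    ConvexOn ℝ (Prod.fst '' G) fun x ↦ sInf ((fun y ↦ Φ (x, y)) '' {y | (x, y) ∈ G}) := by
  have hconv : Convex ℝ (Prod.fst '' G) := hΦ.1.linear_image (LinearMap.fst ℝ E F)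
  refine ⟨hconv, ?_⟩
  rintro x₁ ⟨⟨x₁, y₁⟩, h₁, rfl⟩ x₂ ⟨⟨x₂, y₂⟩, h₂, rfl⟩ a t ha ht hat
  simp only [smul_eq_mul]
  refine le_of_forall_pos_le_add fun ε hε ↦ ?_
  obtain ⟨_, ⟨z₁, hz₁, rfl⟩, hlt₁⟩ := Real.lt_sInf_add_pos
    (s := (fun y ↦ Φ (x₁, y)) '' {y | (x₁, y) ∈ G}) ⟨_, y₁, h₁, rfl⟩ hε
  obtain ⟨_, ⟨z₂, hz₂, rfl⟩, hlt₂⟩ := Real.lt_sInf_add_pos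
    (s := (fun y ↦ Φ (x₂, y)) '' {y | (x₂, y) ∈ G}) ⟨_, y₂, h₂, rfl⟩ hε
  have hle := hΦ.sInf_fiber_smul_add_smul_le hz₁ hz₂ ha ht hat
    (hbdd _ (hconv (mem_image_of_mem _ h₁) (mem_image_of_mem _ h₂) ha ht hat))
  nlinarith

end PartialMinimization

open Matrix

/-- **Convexity of the linear-programming value function.**
The feasibility region `S` of the second-stage problem is convex, and if the
second-stage objective is uniformly bounded below over the feasible points,
then the value function `φ` is convex on `S`. -/
theorem value_function_convexOn
    {n m k p : ℕ}
    (B : Matrix (Fin m) (Fin n) ℝ) (C : Matrix (Fin k) (Fin p) ℝ)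
    (D : Matrix (Fin k) (Fin n) ℝ)
    (c : Fin n → ℝ) (b : Fin m → ℝ) (q : Fin k → ℝ) :
    Convex ℝ {v : Fin p → ℝ | ∃ y : Fin n → ℝ,
        B.mulVec y ≤ b ∧ C.mulVec v + D.mulVec y ≤ q} ∧
    ((∃ L : ℝ, ∀ v ∈ {v : Fin p → ℝ | ∃ y : Fin n → ℝ,
          B.mulVec y ≤ b ∧ C.mulVec v + D.mulVec y ≤ q},
        ∀ y : Fin n → ℝ, B.mulVec y ≤ b → C.mulVec v + D.mulVec y ≤ q →
          L ≤ c ⬝ᵥ y) →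
      ConvexOn ℝ
        {v : Fin p → ℝ | ∃ y : Fin n → ℝ,
          B.mulVec y ≤ b ∧ C.mulVec v + D.mulVec y ≤ q}
        (fun v => sInf {r : ℝ | ∃ y : Fin n → ℝ,
          B.mulVec y ≤ b ∧ C.mulVec v + D.mulVec y ≤ q ∧ r = c ⬝ᵥ y})) := by
  set G : Set ((Fin p → ℝ) × (Fin n → ℝ)) :=
    (B.mulVecLin.comp (LinearMap.snd ℝ _ _)) ⁻¹' Iic b ∩
      (C.mulVecLin.coprod D.mulVecLin) ⁻¹' Iic q
  have hG : Convex ℝ G :=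
    ((convex_Iic b).linear_preimage _).inter ((convex_Iic q).linear_preimage _)
  have hS : {v | ∃ y, B *ᵥ y ≤ b ∧ C *ᵥ v + D *ᵥ y ≤ q} = Prod.fst '' G := by
    ext v; simp [G]
  have hφ (v : Fin p → ℝ) : {r | ∃ y, B *ᵥ y ≤ b ∧ C *ᵥ v + D *ᵥ y ≤ q ∧ r = c ⬝ᵥ y} =
      (fun y ↦ c ⬝ᵥ (v, y).2) '' {y | (v, y) ∈ G} := by
    ext r; simp [G, and_assoc, eq_comm]
  have hΦ : ConvexOn ℝ G fun z ↦ c ⬝ᵥ z.2 :=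
    ((dotProductBilin ℝ ℝ c).comp (LinearMap.snd ℝ _ _)).convexOn hG
  refine ⟨hS ▸ hG.linear_image (LinearMap.fst ℝ _ _), fun ⟨L, hL⟩ ↦ ?_⟩
  simp only [hS, hφ]
  refine hΦ.sInf_fiber fun v hv ↦ ⟨L, ?_⟩
  rintro _ ⟨y, ⟨hB, hC⟩, rfl⟩
  exact hL v (hS ▸ hv) y hB hC
end
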